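/- If the MH kernel $K$ (reversible w.r.t. $\mu$) is $L^2(\mu)$-geometrically ergodic, i.e., $r := \|\mathrm K\|_{L^2_0(\mu)\to L^2_0(\mu)} < 1$, then the augmented MH kernel $K_{\mathrm{aug}}$ is $L^2(\nu)$-geometrically ergodic: for every probability measure $\eta$ on $G\times G$ with $d\eta/d\nu \in L^2(\nu)$ and all $n \geq 2$, $d_{\mathrm{TV}}(\nu, \eta K_{\mathrm{aug}}^n) \leq \frac{1}{2r}\|d\eta/d\nu - 1\|_{L^2(\nu)}\, r^n$. -/

import Mathlib

open MeasureTheory ProbabilityTheory ENNReal Filter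

/-!
The MH kernel and the augmented kernel factor through the same two kernels:
`K = S ∘ₖ B` and `K_aug = B ∘ₖ S`, where `B x = δ_x ⊗ P x` draws a proposal and
`S (x, y) = α(x, y) δ_y + (1 - α(x, y)) δ_x` accepts or rejects it. Hence
`K_aug ^ (m + 1) = (B ∘ₖ K ^ m) ∘ₖ S`, and since `μ` is `K`-invariant (detailed balance),
`ν = B ∘ₘ μ` is `K_aug`-invariant and `S ∘ₘ ν = μ`.

For a set `A`, `y ↦ K_aug ^ (m + 1) (y, A)` is the `S`-average of `ψ = K ^ m [x ↦ B x A]`.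
Averaging by `S` does not increase the `L²` distance to a constant (Jensen, then `S ∘ₘ ν = μ`),
and the spectral gap shrinks the variance of `ψ` by `r ^ (2 m)` from at most `1 / 4`
(Popoviciu). Cauchy–Schwarz against `dη/dν - 1` concludes.
-/

lemma eq_pow_of_succ_eq_mul {M : Type*} [Monoid M] {a : M} {u : ℕ → M} (h1 : u 1 = a)
    (hs : ∀ n, 1 ≤ n → u (n + 1) = a * u n) {n : ℕ} (hn : 1 ≤ n) : u n = a ^ n := by
  induction n, hn using Nat.le_induction with
  | base => rw [h1, pow_one]
  | succ n hn ih => rw [hs n hn, ih, pow_succ']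

namespace ProbabilityTheory.Kernel

variable {X Y : Type*} [MeasurableSpace X] [MeasurableSpace Y]

instance isMarkovKernel_pow (κ : Kernel X X) [IsMarkovKernel κ] (n : ℕ) :
    IsMarkovKernel (κ ^ n) := by
  induction n with
  | zero => rw [pow_zero]; exact inferInstanceAs (IsMarkovKernel Kernel.id)
  | succ n ih => rw [pow_succ]; exact inferInstanceAs (IsMarkovKernel ((κ ^ n) ∘ₖ κ))

lemma Invariant.pow {κ : Kernel X X} {μ : Measure X} (h : κ.Invariant μ) (n : ℕ) :
    (κ ^ n).Invariant μ := by
  induction n with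
  | zero => exact Measure.id_comp
  | succ n ih => rw [pow_succ]; exact ih.comp h

lemma comp_pow_succ (B : Kernel X Y) (C : Kernel Y X) (m : ℕ) :
    (B ∘ₖ C) ^ (m + 1) = (B ∘ₖ ((C ∘ₖ B) ^ m)) ∘ₖ C := by
  induction m with
  | zero => rw [zero_add, pow_one, pow_zero]; exact congrArg (· ∘ₖ C) (comp_id B).symm
  | succ m ih =>
    rw [pow_succ, ih, pow_succ]
    show ((B ∘ₖ ((C ∘ₖ B) ^ m)) ∘ₖ C) ∘ₖ (B ∘ₖ C) = (B ∘ₖ (((C ∘ₖ B) ^ m) ∘ₖ (C ∘ₖ B))) ∘ₖ C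
    simp only [comp_assoc]

lemma Invariant.comp_comm {B : Kernel X Y} {C : Kernel Y X} {μ : Measure X}
    (h : (C ∘ₖ B).Invariant μ) : (B ∘ₖ C).Invariant (B ∘ₘ μ) := by
  rw [Invariant, ← Measure.comp_assoc, Measure.comp_assoc (κ := B), h.def]

noncomputable def acceptRejectKernel (a : X → X → ℝ) (ha : Measurable (Function.uncurry a)) :
    Kernel (X × X) X where
  toFun q := ENNReal.ofReal (a q.1 q.2) • Measure.dirac q.2
    + ENNReal.ofReal (1 - a q.1 q.2) • Measure.dirac q.1
  measurable' := by
    refine Measure.measurable_of_measurable_coe _ fun s hs => ?_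
    simp only [Measure.add_apply, Measure.smul_apply, Measure.dirac_apply' _ hs, smul_eq_mul]
    have hind : ∀ f : X × X → X, Measurable f →
        Measurable fun q => s.indicator (1 : X → ℝ≥0∞) (f q) :=
      fun f hf => (measurable_one.indicator hs).comp hf
    exact (ha.ennreal_ofReal.mul (hind _ measurable_snd)).add
      ((measurable_const.sub ha).ennreal_ofReal.mul (hind _ measurable_fst))

section AcceptReject

variable {a : X → X → ℝ} {ha : Measurable (Function.uncurry a)}

lemma acceptRejectKernel_apply (x y : X) :
    acceptRejectKernel a ha (x, y)
      = ENNReal.ofReal (a x y) • Measure.dirac y + ENNReal.ofReal (1 - a x y) • Measure.dirac x :=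
  rfl

lemma isMarkovKernel_acceptRejectKernel (h0 : ∀ x y, 0 ≤ a x y) (h1 : ∀ x y, a x y ≤ 1) :
    IsMarkovKernel (acceptRejectKernel a ha) := by
  refine ⟨fun ⟨x, y⟩ => ⟨?_⟩⟩
  rw [acceptRejectKernel_apply, Measure.add_apply, Measure.smul_apply, Measure.smul_apply,
    measure_univ, measure_univ, smul_eq_mul, smul_eq_mul, mul_one, mul_one,
    ← ENNReal.ofReal_add (h0 x y) (sub_nonneg.2 (h1 x y)), add_sub_cancel, ENNReal.ofReal_one]

lemma comp_acceptRejectKernel_apply (κ : Kernel X Y) (x y : X) :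
    (κ ∘ₖ acceptRejectKernel a ha) (x, y)
      = ENNReal.ofReal (a x y) • κ y + ENNReal.ofReal (1 - a x y) • κ x := by
  rw [comp_apply, acceptRejectKernel_apply, Measure.comp_add, Measure.comp_smul,
    Measure.comp_smul, Measure.dirac_bind κ.measurable, Measure.dirac_bind κ.measurable]

lemma acceptRejectKernel_comp_id_prod_apply (P : Kernel X X) [IsMarkovKernel P]
    (h0 : ∀ x y, 0 ≤ a x y) (h1 : ∀ x y, a x y ≤ 1) (x : X) :
    (acceptRejectKernel a ha ∘ₖ (Kernel.id ×ₖ P)) x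
      = (P x).withDensity (fun y => ENNReal.ofReal (a x y))
        + ENNReal.ofReal (∫ y, (1 - a x y) ∂P x) • Measure.dirac x := by
  have hax : Measurable (a x) := ha.comp measurable_prodMk_left
  have hreject : Integrable (fun y => 1 - a x y) (P x) :=
    (integrable_const (1 : ℝ)).mono' (measurable_const.sub hax).aestronglyMeasurable
      (ae_of_all _ fun y => by
        rw [Real.norm_eq_abs, abs_le]; constructor <;> linarith [h0 x y, h1 x y])
  ext s hs
  rw [comp_apply' _ _ _ hs, prod_apply, id_apply, Measure.dirac_prod,
    MeasureTheory.lintegral_map ((acceptRejectKernel a ha).measurable_coe hs)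
      measurable_prodMk_left]
  simp only [acceptRejectKernel_apply, Measure.add_apply, Measure.smul_apply,
    smul_eq_mul, withDensity_apply _ hs, Measure.dirac_apply' _ hs]
  rw [lintegral_add_left (f := fun y => ENNReal.ofReal (a x y) * s.indicator 1 y)
      (hax.ennreal_ofReal.mul (measurable_one.indicator hs)),
    lintegral_mul_const _ (f := fun y => ENNReal.ofReal (1 - a x y))
      (measurable_const.sub hax).ennreal_ofReal,
    ← ofReal_integral_eq_lintegral_ofReal hreject (ae_of_all _ fun y => sub_nonneg.2 (h1 x y)),
    ← lintegral_indicator hs]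
  congr 1
  refine lintegral_congr fun y => ?_
  by_cases hy : y ∈ s <;> simp [hy]

end AcceptReject

section DetailedBalance

variable {μ₀ : Measure X} [SFinite μ₀] {π : X → ℝ≥0∞} {w : X → X → ℝ≥0∞} {c : X → ℝ≥0∞}
  {K : Kernel X X}

lemma setLIntegral_withDensity_of_eq_withDensity_add_dirac (hπ : Measurable π)
    (hw : Measurable (Function.uncurry w))
    (hK : ∀ x, K x = μ₀.withDensity (w x) + c x • Measure.dirac x)
    {A B : Set X} (hA : MeasurableSet A) (hB : MeasurableSet B) :
    ∫⁻ x in A, K x B ∂(μ₀.withDensity π)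
      = ∫⁻ x in A, ∫⁻ y in B, π x * w x y ∂μ₀ ∂μ₀ + ∫⁻ x in B ∩ A, π x * c x ∂μ₀ := by
  have hcB : ∀ x, π x * (c x * B.indicator 1 x) = B.indicator (π * c) x := fun x => by
    by_cases hx : x ∈ B <;> simp [hx]
  rw [restrict_withDensity hA, lintegral_withDensity_eq_lintegral_mul _ hπ (K.measurable_coe hB)]
  simp only [Pi.mul_apply, hK, Measure.add_apply, withDensity_apply _ hB, Measure.smul_apply,
    Measure.dirac_apply' _ hB, smul_eq_mul, mul_add, hcB]
  rw [lintegral_add_left (f := fun x => π x * ∫⁻ y in B, w x y ∂μ₀)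
      (hπ.mul (hw.lintegral_prod_right' (ν := μ₀.restrict B))),
    lintegral_indicator hB, Measure.restrict_restrict hB]
  refine congrArg (· + _) (lintegral_congr fun x => ?_)
  exact (lintegral_const_mul _ (hw.comp measurable_prodMk_left)).symm

theorem isReversible_of_detailedBalance (hπ : Measurable π)
    (hw : Measurable (Function.uncurry w))
    (hK : ∀ x, K x = μ₀.withDensity (w x) + c x • Measure.dirac x)
    (hbal : ∀ x y, π x * w x y = π y * w y x) :
    K.IsReversible (μ₀.withDensity π) := by
  intro A B hA hB
  rw [setLIntegral_withDensity_of_eq_withDensity_add_dirac hπ hw hK hA hB,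
    setLIntegral_withDensity_of_eq_withDensity_add_dirac hπ hw hK hB hA, Set.inter_comm,
    lintegral_lintegral_swap ((hπ.comp measurable_fst).mul hw).aemeasurable]
  simp_rw [hbal]

end DetailedBalance

end ProbabilityTheory.Kernel

section MetropolisHastings

lemma mul_min_one_ite_div {a b : ℝ} (ha : 0 ≤ a) (hb : 0 ≤ b) :
    a * min 1 (if 0 < a then b / a else 1) = min a b := by
  split_ifs with h
  · rw [mul_min_of_nonneg _ _ ha, mul_one, mul_div_cancel₀ _ h.ne']
  · rw [le_antisymm (not_lt.1 h) ha, zero_mul, min_eq_left hb]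

variable {X : Type*}

noncomputable def mhAcceptance (ρ : X → ℝ) (p : X → X → ℝ) (x y : X) : ℝ :=
  min 1 (if 0 < ρ x * p x y then ρ y * p y x / (ρ x * p x y) else 1)

variable {ρ : X → ℝ} {p : X → X → ℝ}

lemma mhAcceptance_nonneg (hρ : ∀ x, 0 ≤ ρ x) (hp : ∀ x y, 0 ≤ p x y) (x y : X) :
    0 ≤ mhAcceptance ρ p x y :=
  le_min zero_le_one (by
    split_ifs
    · exact div_nonneg (mul_nonneg (hρ y) (hp y x)) (mul_nonneg (hρ x) (hp x y))
    · exact zero_le_one)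

lemma mhAcceptance_le_one (x y : X) : mhAcceptance ρ p x y ≤ 1 := min_le_left _ _

lemma mul_mhAcceptance (hρ : ∀ x, 0 ≤ ρ x) (hp : ∀ x y, 0 ≤ p x y) (x y : X) :
    ρ x * p x y * mhAcceptance ρ p x y = min (ρ x * p x y) (ρ y * p y x) :=
  mul_min_one_ite_div (mul_nonneg (hρ x) (hp x y)) (mul_nonneg (hρ y) (hp y x))

variable [MeasurableSpace X]

lemma measurable_mhAcceptance (hρ : Measurable ρ) (hp : Measurable (Function.uncurry p)) :
    Measurable (Function.uncurry (mhAcceptance ρ p)) := by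
  have hforward : Measurable fun q : X × X => ρ q.1 * p q.1 q.2 := (hρ.comp measurable_fst).mul hp
  have hbackward : Measurable fun q : X × X => ρ q.2 * p q.2 q.1 := hforward.comp measurable_swap
  exact measurable_const.min (Measurable.ite (measurableSet_lt measurable_const hforward)
    (hbackward.div hforward) measurable_const)

theorem isReversible_mhKernel {μ₀ : Measure X} [SFinite μ₀] (hρm : Measurable ρ)
    (hρ0 : ∀ x, 0 ≤ ρ x) (hpm : Measurable (Function.uncurry p)) (hp0 : ∀ x y, 0 ≤ p x y)
    {Z : ℝ} (hZ : 0 ≤ Z) {P : Kernel X X}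
    (hP : ∀ x, P x = μ₀.withDensity fun y => ENNReal.ofReal (p x y)) {K : Kernel X X}
    (hK : ∀ x, K x = (P x).withDensity (fun y => ENNReal.ofReal (mhAcceptance ρ p x y)) +
      ENNReal.ofReal (∫ y, (1 - mhAcceptance ρ p x y) ∂(P x)) • Measure.dirac x) :
    K.IsReversible (μ₀.withDensity fun x => ENNReal.ofReal (ρ x / Z)) := by
  have hαm := measurable_mhAcceptance hρm hpm
  refine Kernel.isReversible_of_detailedBalance (hρm.div_const Z).ennreal_ofReal
    (w := fun x y => ENNReal.ofReal (p x y) * ENNReal.ofReal (mhAcceptance ρ p x y))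
    (c := fun x => ENNReal.ofReal (∫ y, (1 - mhAcceptance ρ p x y) ∂(P x)))
    (hpm.ennreal_ofReal.mul hαm.ennreal_ofReal) (fun x => ?_) (fun x y => ?_)
  · rw [hK, hP, ← withDensity_mul μ₀ (f := fun y => ENNReal.ofReal (p x y))
      (g := fun y => ENNReal.ofReal (mhAcceptance ρ p x y))
      (hpm.comp measurable_prodMk_left).ennreal_ofReal
      (hαm.comp measurable_prodMk_left).ennreal_ofReal]
    rfl
  · simp_rw [← ofReal_mul (hp0 _ _), ← ofReal_mul (div_nonneg (hρ0 _) hZ),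
      div_mul_eq_mul_div, ← mul_assoc, mul_mhAcceptance hρ0 hp0, min_comm]

lemma isProbabilityMeasure_withDensity_div_integral {μ₀ : Measure X}
    (hρ0 : ∀ x, 0 ≤ ρ x) (hρ : Integrable ρ μ₀) (hZ : 0 < ∫ x, ρ x ∂μ₀) :
    IsProbabilityMeasure (μ₀.withDensity fun x => ENNReal.ofReal (ρ x / ∫ x, ρ x ∂μ₀)) := by
  constructor
  rw [withDensity_apply _ .univ, Measure.restrict_univ,
    ← ofReal_integral_eq_lintegral_ofReal (hρ.div_const _)
      (ae_of_all _ fun x => div_nonneg (hρ0 x) hZ.le), integral_div, div_self hZ.ne', ofReal_one]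

end MetropolisHastings

section L2

variable {X Y : Type*} [MeasurableSpace X] [MeasurableSpace Y]

lemma toReal_comp_apply (κ : Kernel X Y) [IsFiniteKernel κ] (m : Measure X) {A : Set Y}
    (hA : MeasurableSet A) : ((κ ∘ₘ m) A).toReal = ∫ x, (κ x A).toReal ∂m := by
  rw [Measure.bind_apply hA κ.aemeasurable,
    integral_toReal (κ.measurable_coe hA).aemeasurable (ae_of_all _ fun _ => measure_lt_top _ _)]

lemma norm_toReal_apply_le_one (κ : Kernel X Y) [IsMarkovKernel κ] (x : X) (A : Set Y) :
    ‖(κ x A).toReal‖ ≤ 1 := by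
  rw [Real.norm_eq_abs, abs_of_nonneg toReal_nonneg]
  exact measureReal_le_one

lemma MeasureTheory.MemLp.toReal_eLpNorm_two_sq {μ : Measure X} {f : X → ℝ} (hf : MemLp f 2 μ) :
    (eLpNorm f 2 μ).toReal ^ 2 = ∫ x, f x ^ 2 ∂μ := by
  rw [hf.eLpNorm_eq_integral_rpow_norm two_ne_zero ofNat_ne_top, toReal_ofReal (by positivity),
    ← Real.rpow_natCast, ← Real.rpow_mul (integral_nonneg fun _ => by positivity)]
  norm_num [Real.norm_eq_abs, sq_abs]

lemma MeasureTheory.MemLp.sub_const_of_norm_le {μ : Measure X} [IsFiniteMeasure μ] {f : X → ℝ}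
    (hf : Measurable f) {C : ℝ} (hC : ∀ x, ‖f x‖ ≤ C) (c : ℝ) :
    MemLp (fun x => f x - c) 2 μ :=
  .of_bound (hf.sub measurable_const).aestronglyMeasurable (C + ‖c‖)
    (ae_of_all _ fun x => (norm_sub_le _ _).trans (add_le_add_left (hC x) _))

lemma abs_integral_mul_le_toReal_eLpNorm_two_mul {μ : Measure X} {f g : X → ℝ}
    (hf : MemLp f 2 μ) (hg : MemLp g 2 μ) :
    |∫ x, f x * g x ∂μ| ≤ (eLpNorm f 2 μ).toReal * (eLpNorm g 2 μ).toReal := by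
  have h2 : ENNReal.ofReal 2 = 2 := ofReal_ofNat 2
  have hholder := integral_mul_norm_le_Lp_mul_Lq (μ := μ) Real.HolderConjugate.two_two
    (h2 ▸ hf) (h2 ▸ hg)
  rw [hf.eLpNorm_eq_integral_rpow_norm two_ne_zero ofNat_ne_top,
    hg.eLpNorm_eq_integral_rpow_norm two_ne_zero ofNat_ne_top,
    toReal_ofReal (by positivity), toReal_ofReal (by positivity)]
  calc |∫ x, f x * g x ∂μ| ≤ ∫ x, ‖f x‖ * ‖g x‖ ∂μ := by
        simpa only [← norm_mul, Real.norm_eq_abs, abs_mul]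
          using norm_integral_le_integral_norm (fun x => f x * g x)
    _ ≤ _ := by simpa only [one_div, toReal_ofNat] using hholder

lemma eLpNorm_two_rpow_two {ε : Type*} [ENorm ε] {μ : Measure X} (f : X → ε) :
    eLpNorm f 2 μ ^ (2 : ℝ) = ∫⁻ x, ‖f x‖ₑ ^ (2 : ℝ) ∂μ := by
  simpa using eLpNorm_nnreal_pow_eq_lintegral (μ := μ) (f := f) (p := 2) two_ne_zero

lemma eLpNorm_integral_kernel_le (S : Kernel X Y) [IsMarkovKernel S] (ν : Measure X)
    {f : Y → ℝ} (hf : Measurable f) :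
    eLpNorm (fun x => ∫ y, f y ∂S x) 2 ν ≤ eLpNorm f 2 (S ∘ₘ ν) := by
  have hjensen : ∀ x, ‖∫ y, f y ∂S x‖ₑ ≤ ‖eLpNorm f 2 (S x)‖ₑ := fun x =>
    calc ‖∫ y, f y ∂S x‖ₑ ≤ eLpNorm f 1 (S x) := by
          rw [eLpNorm_one_eq_lintegral_enorm]; exact enorm_integral_le_lintegral_enorm f
      _ ≤ eLpNorm f 2 (S x) :=
          eLpNorm_le_eLpNorm_of_exponent_le one_le_two hf.aestronglyMeasurable
  refine (eLpNorm_mono_enorm hjensen).trans_eq ?_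
  refine ENNReal.rpow_left_injective (two_ne_zero (α := ℝ)) ?_
  simp only [eLpNorm_two_rpow_two, enorm_eq_self]
  rw [Measure.lintegral_bind S.aemeasurable (hf.enorm.pow_const _).aemeasurable]

variable {ν : Measure X} {g : X → ℝ}

lemma integral_eq_one_of_isProbabilityMeasure_withDensity (hg0 : ∀ x, 0 ≤ g x)
    (hg : Integrable g ν) [IsProbabilityMeasure (ν.withDensity fun x => ENNReal.ofReal (g x))] :
    ∫ x, g x ∂ν = 1 := by
  have hmass := measure_univ (μ := ν.withDensity fun x => ENNReal.ofReal (g x))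
  rwa [withDensity_apply _ .univ, Measure.restrict_univ,
    ← ofReal_integral_eq_lintegral_ofReal hg (ae_of_all _ hg0), ofReal_eq_one] at hmass

lemma toReal_comp_withDensity_apply (κ : Kernel X Y) [IsFiniteKernel κ] (hg0 : ∀ x, 0 ≤ g x)
    (hgm : Measurable g) {A : Set Y} (hA : MeasurableSet A) :
    ((κ ∘ₘ ν.withDensity fun x => ENNReal.ofReal (g x)) A).toReal
      = ∫ x, g x * (κ x A).toReal ∂ν := by
  rw [toReal_comp_apply κ _ hA]
  refine (integral_withDensity_eq_integral_smul hgm.real_toNNReal _).trans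
    (integral_congr_ae (ae_of_all _ fun x => ?_))
  show (g x).toNNReal • (κ x A).toReal = g x * (κ x A).toReal
  rw [NNReal.smul_def, Real.coe_toNNReal _ (hg0 x), smul_eq_mul]

lemma abs_comp_sub_comp_withDensity_le [IsProbabilityMeasure ν]
    (κ : Kernel X Y) [IsMarkovKernel κ] (hg0 : ∀ x, 0 ≤ g x) (hgm : Measurable g)
    (hg : MemLp g 2 ν) [IsProbabilityMeasure (ν.withDensity fun x => ENNReal.ofReal (g x))]
    {A : Set Y} (hA : MeasurableSet A) (c : ℝ) :
    |((κ ∘ₘ ν) A).toReal - ((κ ∘ₘ ν.withDensity fun x => ENNReal.ofReal (g x)) A).toReal|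
      ≤ (eLpNorm (fun x => g x - 1) 2 ν).toReal
        * (eLpNorm (fun x => (κ x A).toReal - c) 2 ν).toReal := by
  set F : X → ℝ := fun x => (κ x A).toReal
  have hF_m : Measurable F := (κ.measurable_coe hA).ennreal_toReal
  have hF_le : ∀ x, ‖F x‖ ≤ 1 := fun x => norm_toReal_apply_le_one κ x A
  have hg_int : Integrable g ν := hg.integrable one_le_two
  have hgF_int : Integrable (fun x => g x * F x) ν :=
    hg_int.mul_bdd hF_m.aestronglyMeasurable (ae_of_all _ hF_le)
  have hF_int : Integrable F ν := .of_bound hF_m.aestronglyMeasurable 1 (ae_of_all _ hF_le)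
  -- `∫ (g - 1) = 0` lets us subtract any constant from `F`.
  have hcentered : ∫ x, (g x - 1) * (F x - c) ∂ν = ∫ x, g x * F x ∂ν - ∫ x, F x ∂ν :=
    calc ∫ x, (g x - 1) * (F x - c) ∂ν = ∫ x, (g x * F x - F x) - c * (g x - 1) ∂ν :=
          integral_congr_ae (ae_of_all _ fun x => by ring)
      _ = (∫ x, g x * F x ∂ν - ∫ x, F x ∂ν) - c * (∫ x, g x ∂ν - 1) := by
          rw [integral_sub (f := fun x => g x * F x - F x) (g := fun x => c * (g x - 1))
              (hgF_int.sub hF_int) ((hg_int.sub (integrable_const 1)).const_mul c),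
            integral_sub hgF_int hF_int, integral_const_mul,
            integral_sub (f := g) (g := fun _ => (1 : ℝ)) hg_int (integrable_const 1),
            integral_const, probReal_univ, one_smul]
      _ = ∫ x, g x * F x ∂ν - ∫ x, F x ∂ν := by
          rw [integral_eq_one_of_isProbabilityMeasure_withDensity hg0 hg_int]; ring
  rw [toReal_comp_apply κ _ hA, toReal_comp_withDensity_apply κ hg0 hgm hA, abs_sub_comm,
    ← hcentered]
  exact abs_integral_mul_le_toReal_eLpNorm_two_mul (hg.sub (memLp_const 1))
    (.sub_const_of_norm_le hF_m hF_le c)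

end L2

namespace ProbabilityTheory.Kernel

variable {X Y : Type*} [MeasurableSpace X] [MeasurableSpace Y]

/-- `‖K‖_{L²₀(μ) → L²₀(μ)} ≤ r`, tested on mean-zero functions in `L²(μ)`. -/
def L2ZeroNormLE (K : Kernel X X) (μ : Measure X) (r : ℝ) : Prop :=
  ∀ f : X → ℝ, MemLp f 2 μ → ∫ x, f x ∂μ = 0 →
    eLpNorm (fun x => ∫ z, f z ∂(K x)) 2 μ ≤ ENNReal.ofReal r * eLpNorm f 2 μ

variable {μ : Measure X} [IsProbabilityMeasure μ] {K : Kernel X X} [IsMarkovKernel K] {r : ℝ}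

lemma L2ZeroNormLE.variance_integral_le (hgap : K.L2ZeroNormLE μ r) (hr : 0 ≤ r)
    {f : X → ℝ} (hf : Measurable f) {C : ℝ} (hC : ∀ x, ‖f x‖ ≤ C) :
    Var[fun x => ∫ z, f z ∂K x; μ] ≤ r ^ 2 * Var[f; μ] := by
  have hf_int : ∀ ν : Measure X, [IsFiniteMeasure ν] → Integrable f ν := fun ν _ =>
    .of_bound hf.aestronglyMeasurable C (ae_of_all _ hC)
  set φ : X → ℝ := fun x => f x - μ[f]
  have hφ : MemLp φ 2 μ := .sub_const_of_norm_le hf hC _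
  have hφ_mean : ∫ x, φ x ∂μ = 0 := by
    simp [φ, integral_sub (hf_int μ) (integrable_const _)]
  have hKφ_eq : ∀ x, ∫ z, φ z ∂K x = ∫ z, f z ∂K x - μ[f] := fun x => by
    simp [φ, integral_sub (hf_int (K x)) (integrable_const _)]
  have hKf_m : Measurable fun x => ∫ z, f z ∂K x :=
    hf.stronglyMeasurable.integral_kernel.measurable
  have hKφ : MemLp (fun x => ∫ z, φ z ∂K x) 2 μ := by
    simp_rw [hKφ_eq]
    exact .sub_const_of_norm_le hKf_m (fun x => by
      simpa using norm_integral_le_of_norm_le_const (μ := K x) (ae_of_all _ hC)) _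
  have hcontract := toReal_mono (by finiteness) (hgap φ hφ hφ_mean)
  rw [toReal_mul, toReal_ofReal hr] at hcontract
  calc Var[fun x => ∫ z, f z ∂K x; μ] = Var[fun x => ∫ z, φ z ∂K x; μ] := by
        simp_rw [hKφ_eq]; exact (variance_sub_const hKf_m.aestronglyMeasurable _).symm
    _ ≤ μ[fun x => (∫ z, φ z ∂K x) ^ 2] := variance_le_expectation_sq hKφ.aestronglyMeasurable
    _ = (eLpNorm (fun x => ∫ z, φ z ∂K x) 2 μ).toReal ^ 2 := hKφ.toReal_eLpNorm_two_sq.symm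
    _ ≤ (r * (eLpNorm φ 2 μ).toReal) ^ 2 := pow_le_pow_left₀ toReal_nonneg hcontract 2
    _ = r ^ 2 * Var[f; μ] := by
        rw [mul_pow, hφ.toReal_eLpNorm_two_sq, variance_eq_integral hf.aemeasurable]

lemma L2ZeroNormLE.variance_integral_pow_le (hgap : K.L2ZeroNormLE μ r) (hr : 0 ≤ r)
    {f : X → ℝ} (hf : Measurable f) {C : ℝ} (hC : ∀ x, ‖f x‖ ≤ C) (m : ℕ) :
    Var[fun x => ∫ z, f z ∂(K ^ m) x; μ] ≤ r ^ (2 * m) * Var[f; μ] := by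
  induction m generalizing f with
  | zero =>
    simp only [pow_zero, Nat.mul_zero, one_mul]
    exact (variance_congr (ae_of_all _ fun x => integral_dirac' f x hf.stronglyMeasurable)).le
  | succ m ih =>
    have hKf_m : Measurable fun x => ∫ z, f z ∂K x :=
      hf.stronglyMeasurable.integral_kernel.measurable
    have hKf_C : ∀ x, ‖∫ z, f z ∂K x‖ ≤ C := fun x => by
      simpa using norm_integral_le_of_norm_le_const (μ := K x) (ae_of_all _ hC)
    have hstep : ∀ x, ∫ z, f z ∂(K ^ (m + 1)) x = ∫ y, ∫ z, f z ∂K y ∂(K ^ m) x := fun x => by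
      rw [pow_succ']
      exact integral_comp (.of_bound hf.aestronglyMeasurable C (ae_of_all _ hC))
    simp_rw [hstep]
    calc _ ≤ r ^ (2 * m) * Var[fun x => ∫ z, f z ∂K x; μ] := ih hKf_m hKf_C
      _ ≤ r ^ (2 * m) * (r ^ 2 * Var[f; μ]) := by
          gcongr; exact hgap.variance_integral_le hr hf hC
      _ = r ^ (2 * (m + 1)) * Var[f; μ] := by ring

lemma L2ZeroNormLE.variance_comp_pow_apply_le (hgap : K.L2ZeroNormLE μ r) (hr : 0 ≤ r)
    (B : Kernel X Y) [IsMarkovKernel B] {A : Set Y} (hA : MeasurableSet A) (m : ℕ) :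
    Var[fun x => ((B ∘ₖ (K ^ m)) x A).toReal; μ] ≤ (r ^ m / 2) ^ 2 := by
  set h : X → ℝ := fun x => (B x A).toReal
  have hh_m : Measurable h := (B.measurable_coe hA).ennreal_toReal
  have hh_mem : ∀ x, h x ∈ Set.Icc 0 1 := fun x => ⟨toReal_nonneg, measureReal_le_one⟩
  simp_rw [comp_apply, toReal_comp_apply B _ hA]
  calc _ ≤ r ^ (2 * m) * Var[h; μ] :=
        hgap.variance_integral_pow_le hr hh_m (norm_toReal_apply_le_one B · A) m
    _ ≤ r ^ (2 * m) * ((1 - 0) / 2) ^ 2 := by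
        gcongr; exact variance_le_sq_of_bounded (ae_of_all _ hh_mem) hh_m.aemeasurable
    _ = (r ^ m / 2) ^ 2 := by ring

end ProbabilityTheory.Kernel

section Augmentation

variable {X Y : Type*} [MeasurableSpace X] [MeasurableSpace Y]
  {μ : Measure X} [IsProbabilityMeasure μ] {K : Kernel X X} [IsMarkovKernel K] {r : ℝ}
  {B : Kernel X Y} [IsMarkovKernel B] {S : Kernel Y X} [IsMarkovKernel S]

lemma exists_toReal_eLpNorm_comp_pow_apply_sub_le (hK : K.Invariant μ) (hSB : S ∘ₖ B = K)
    (hgap : K.L2ZeroNormLE μ r) (hr : 0 ≤ r) {A : Set Y} (hA : MeasurableSet A) (m : ℕ) :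
    ∃ c : ℝ, (eLpNorm (fun y => (((B ∘ₖ S) ^ (m + 1)) y A).toReal - c) 2 (B ∘ₘ μ)).toReal
      ≤ r ^ m / 2 := by
  set ψ : X → ℝ := fun x => ((B ∘ₖ (K ^ m)) x A).toReal
  have hψ_m : Measurable ψ := ((B ∘ₖ (K ^ m)).measurable_coe hA).ennreal_toReal
  have hψ_le : ∀ x, ‖ψ x‖ ≤ 1 := fun x => norm_toReal_apply_le_one _ x A
  have hψ_L2 := MemLp.sub_const_of_norm_le (μ := μ) hψ_m hψ_le μ[ψ]
  have hS_avg : ∀ y, (((B ∘ₖ S) ^ (m + 1)) y A).toReal - μ[ψ] = ∫ x, (ψ x - μ[ψ]) ∂S y :=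
    fun y => by
      rw [Kernel.comp_pow_succ, hSB, Kernel.comp_apply, toReal_comp_apply _ _ hA,
        integral_sub (.of_bound hψ_m.aestronglyMeasurable 1 (ae_of_all _ hψ_le))
          (integrable_const _), integral_const, probReal_univ, one_smul]
  have hSν : S ∘ₘ (B ∘ₘ μ) = μ := by rw [Measure.comp_assoc, hSB]; exact hK
  refine ⟨μ[ψ], ?_⟩
  simp_rw [hS_avg]
  calc _ ≤ (eLpNorm (fun x => ψ x - μ[ψ]) 2 μ).toReal :=
        toReal_mono hψ_L2.eLpNorm_ne_top ((eLpNorm_integral_kernel_le S _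
          (hψ_m.sub measurable_const)).trans_eq (by rw [hSν]; rfl))
    _ ≤ r ^ m / 2 := by
        refine abs_le_of_sq_le_sq' ?_ (by positivity) |>.2
        rw [hψ_L2.toReal_eLpNorm_two_sq, ← variance_eq_integral hψ_m.aemeasurable]
        exact hgap.variance_comp_pow_apply_le hr B hA m

theorem abs_toReal_sub_comp_pow_withDensity_le (hK : K.Invariant μ) (hSB : S ∘ₖ B = K)
    (hgap : K.L2ZeroNormLE μ r) (hr : 0 ≤ r) {ν : Measure Y} (hν : B ∘ₘ μ = ν) {g : Y → ℝ}
    (hg0 : ∀ y, 0 ≤ g y) (hgm : Measurable g) (hg : MemLp g 2 ν)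
    [IsProbabilityMeasure (ν.withDensity fun y => ENNReal.ofReal (g y))]
    {A : Set Y} (hA : MeasurableSet A) (m : ℕ) :
    |(ν A).toReal
        - ((((B ∘ₖ S) ^ (m + 1)) ∘ₘ ν.withDensity fun y => ENNReal.ofReal (g y)) A).toReal|
      ≤ (eLpNorm (fun y => g y - 1) 2 ν).toReal * (r ^ m / 2) := by
  subst hν
  obtain ⟨c, hc⟩ := exists_toReal_eLpNorm_comp_pow_apply_sub_le hK hSB hgap hr hA m
  have hν_inv : ((B ∘ₖ S) ^ (m + 1)).Invariant (B ∘ₘ μ) :=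
    (Kernel.Invariant.comp_comm (hSB ▸ hK)).pow _
  calc _ = |((((B ∘ₖ S) ^ (m + 1)) ∘ₘ (B ∘ₘ μ)) A).toReal
        - ((((B ∘ₖ S) ^ (m + 1)) ∘ₘ (B ∘ₘ μ).withDensity fun y => ENNReal.ofReal (g y)) A).toReal|
        := by rw [hν_inv.def]
    _ ≤ _ := abs_comp_sub_comp_withDensity_le _ hg0 hgm hg hA c
    _ ≤ _ := by gcongr

end Augmentation

theorem Kaug_geometrically_ergodic_general
    {G : Type*} [MeasurableSpace G]
    (μ₀ : Measure G) [SigmaFinite μ₀]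
    (ρ : G → ℝ) (hρm : Measurable ρ) (hρ0 : ∀ x, 0 ≤ ρ x) (hρint : Integrable ρ μ₀)
    (Z : ℝ) (hZ : Z = ∫ x, ρ x ∂μ₀) (hZpos : 0 < Z)
    (μ : Measure G)
    (hμ : μ = μ₀.withDensity fun x => ENNReal.ofReal (ρ x / Z))
    (P : Kernel G G) [IsMarkovKernel P]
    (p : G → G → ℝ) (hpm : Measurable (Function.uncurry p)) (hp0 : ∀ x y, 0 ≤ p x y)
    (hP : ∀ x, P x = μ₀.withDensity fun y => ENNReal.ofReal (p x y))
    (r : G → G → ℝ)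
    (hr : ∀ x y, r x y = if 0 < ρ x * p x y then ρ y * p y x / (ρ x * p x y) else 1)
    (α : G → G → ℝ) (hα : ∀ x y, α x y = min 1 (r x y))
    (K : Kernel G G) [IsMarkovKernel K]
    (hK : ∀ x, K x = (P x).withDensity (fun y => ENNReal.ofReal (α x y)) +
      ENNReal.ofReal (∫ y, (1 - α x y) ∂(P x)) • Measure.dirac x)
    (Kaug : Kernel (G × G) (G × G))
    (hKaug : ∀ x y, Kaug (x, y) =
      ENNReal.ofReal (α x y) • ((Measure.dirac y).prod (P y)) +
      ENNReal.ofReal (1 - α x y) • ((Measure.dirac x).prod (P x)))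
    (ν : Measure (G × G)) (hν : ν = μ.compProd P)
    (KaugP : ℕ → Kernel (G × G) (G × G)) (hKaugP1 : KaugP 1 = Kaug)
    (hKaugPs : ∀ n, 1 ≤ n → KaugP (n + 1) = Kaug ∘ₖ KaugP n)
    (rgap : ℝ) (hr0 : 0 < rgap)
    (hnorm : ∀ f : G → ℝ, MemLp f 2 μ → ∫ x, f x ∂μ = 0 →
      eLpNorm (fun x => ∫ z, f z ∂(K x)) 2 μ ≤ ENNReal.ofReal rgap * eLpNorm f 2 μ)
    (g : G × G → ℝ) (hg0 : ∀ q, 0 ≤ g q) (hgm : Measurable g) (hgL2 : MemLp g 2 ν)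
    (η : Measure (G × G)) (hη : η = ν.withDensity fun q => ENNReal.ofReal (g q))
    [IsProbabilityMeasure η] :
    ∀ n, 2 ≤ n → ∀ A : Set (G × G), MeasurableSet A →
      |(ν A).toReal - ((η.bind fun q => KaugP n q) A).toReal| ≤
        (1 / (2 * rgap)) * (eLpNorm (fun q => g q - 1) 2 ν).toReal * rgap ^ n := by
  intro n hn A hA
  obtain ⟨m, rfl⟩ : ∃ m, n = m + 1 := ⟨n - 1, by omega⟩
  obtain rfl : α = mhAcceptance ρ p := by funext x y; rw [hα, hr]; rfl
  subst hη
  have hα0 := mhAcceptance_nonneg hρ0 hp0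
  let S := Kernel.acceptRejectKernel _ (measurable_mhAcceptance hρm hpm)
  have : IsMarkovKernel S := Kernel.isMarkovKernel_acceptRejectKernel hα0 mhAcceptance_le_one
  have : IsProbabilityMeasure μ :=
    hμ ▸ hZ ▸ isProbabilityMeasure_withDensity_div_integral hρ0 hρint (hZ ▸ hZpos)
  have hK_inv : K.Invariant μ :=
    (hμ ▸ isReversible_mhKernel hρm hρ0 hpm hp0 hZpos.le hP hK).invariant
  have hK_eq : S ∘ₖ (Kernel.id ×ₖ P) = K := Kernel.ext fun x => by
    rw [hK, Kernel.acceptRejectKernel_comp_id_prod_apply P hα0 mhAcceptance_le_one]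
  have hKaug_eq : Kaug = (Kernel.id ×ₖ P) ∘ₖ S := Kernel.ext fun ⟨x, y⟩ => by
    rw [hKaug, Kernel.comp_acceptRejectKernel_apply, Kernel.prod_apply, Kernel.prod_apply,
      Kernel.id_apply, Kernel.id_apply]
  rw [eq_pow_of_succ_eq_mul hKaugP1 hKaugPs (by omega), hKaug_eq]
  calc _ ≤ (eLpNorm (fun q => g q - 1) 2 ν).toReal * (rgap ^ m / 2) :=
        abs_toReal_sub_comp_pow_withDensity_le hK_inv hK_eq hnorm hr0.le
          (hν.trans (Measure.compProd_eq_comp_prod μ P)).symm hg0 hgm hgL2 hA m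
    _ = _ := by field_simp; ring

/-- If the MH kernel K has L²(μ)-spectral bound r < 1 on mean-zero
functions, then the augmented kernel K_aug is L²(ν)-geometrically ergodic:
for any initial distribution η = g·ν with g ∈ L²(ν), and all n ≥ 2,
d_TV(ν, η K_augⁿ) ≤ (1/(2r)) ‖dη/dν - 1‖_{L²(ν)} rⁿ (stated as a bound for
every measurable set). -/
theorem Kaug_geometrically_ergodic
    {G : Type*} [MeasurableSpace G]
    (μ₀ : Measure G) [SigmaFinite μ₀]
    (ρ : G → ℝ) (hρm : Measurable ρ) (hρ0 : ∀ x, 0 ≤ ρ x) (hρint : Integrable ρ μ₀)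
    (Z : ℝ) (hZ : Z = ∫ x, ρ x ∂μ₀) (hZpos : 0 < Z)
    (μ : Measure G) [SFinite μ]
    (hμ : μ = μ₀.withDensity fun x => ENNReal.ofReal (ρ x / Z))
    (P : Kernel G G) [IsMarkovKernel P]
    (p : G → G → ℝ) (hpm : Measurable (Function.uncurry p)) (hp0 : ∀ x y, 0 ≤ p x y)
    (hP : ∀ x, P x = μ₀.withDensity fun y => ENNReal.ofReal (p x y))
    (hpos : ∀ x y, 0 < ρ y → 0 < p x y)
    (bar : G → G → ℝ) (hbar : ∀ x y, bar x y = if 0 < ρ y then ρ y / p x y else 0)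
    (r : G → G → ℝ)
    (hr : ∀ x y, r x y = if 0 < ρ x * p x y then ρ y * p y x / (ρ x * p x y) else 1)
    (α : G → G → ℝ) (hα : ∀ x y, α x y = min 1 (r x y))
    (K : Kernel G G) [IsMarkovKernel K]
    (hK : ∀ x, K x = (P x).withDensity (fun y => ENNReal.ofReal (α x y)) +
      ENNReal.ofReal (∫ y, (1 - α x y) ∂(P x)) • Measure.dirac x)
    (Kaug : Kernel (G × G) (G × G)) [IsMarkovKernel Kaug]
    (hKaug : ∀ x y, Kaug (x, y) =
      ENNReal.ofReal (α x y) • ((Measure.dirac y).prod (P y)) +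
      ENNReal.ofReal (1 - α x y) • ((Measure.dirac x).prod (P x)))
    (ν : Measure (G × G)) (hν : ν = μ.compProd P)
    (KaugP : ℕ → Kernel (G × G) (G × G)) (hKaugP1 : KaugP 1 = Kaug)
    (hKaugPs : ∀ n, 1 ≤ n → KaugP (n + 1) = Kaug ∘ₖ KaugP n)
    (rgap : ℝ) (hr0 : 0 < rgap) (hr1 : rgap < 1)
    (hnorm : ∀ f : G → ℝ, MemLp f 2 μ → ∫ x, f x ∂μ = 0 →
      eLpNorm (fun x => ∫ z, f z ∂(K x)) 2 μ ≤ ENNReal.ofReal rgap * eLpNorm f 2 μ)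
    (g : G × G → ℝ) (hg0 : ∀ q, 0 ≤ g q) (hgm : Measurable g) (hgL2 : MemLp g 2 ν)
    (η : Measure (G × G)) (hη : η = ν.withDensity fun q => ENNReal.ofReal (g q))
    [IsProbabilityMeasure η] :
    ∀ n, 2 ≤ n → ∀ A : Set (G × G), MeasurableSet A →
      |(ν A).toReal - ((η.bind fun q => KaugP n q) A).toReal| ≤
        (1 / (2 * rgap)) * (eLpNorm (fun q => g q - 1) 2 ν).toReal * rgap ^ n :=
  Kaug_geometrically_ergodic_general μ₀ ρ hρm hρ0 hρint Z hZ hZpos μ hμ P p hpm hp0 hP r hr α hα K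
    hK Kaug hKaug ν hν KaugP hKaugP1 hKaugPs rgap hr0 hnorm g hg0 hgm hgL2 η hη
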